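/- For all integers n ≥ 2 and 0 ≤ k ≤ n - 1: (1 - k/n) + ((n-k)(n^2 - n + k)/(n(n-1))) * (H_n - 1) ≤ (n - k) * (1 + 1/n) * (H_{n+1} - 1), where H_m = Σ_{j=1}^{m} 1/j is the m-th harmonic number. -/

import Mathlib

noncomputable def harm (m : ℕ) : ℝ := ∑ k ∈ Finset.Icc 1 m, (1 : ℝ) / k

/-!
Put `a = n - k` and `H = H_n`. Since `H_{n+1} = H + 1/(n+1)`, the right-hand side equals
`a/n + a (1 + 1/n) (H - 1)`, and `a/n = 1 - k/n` is the first summand on the left. What remains is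
to compare the coefficients of `H - 1 ≥ 0`: `(n² - n + k)/(n(n-1)) ≤ (n² - 1)/(n(n-1)) = 1 + 1/n`,
because `k ≤ n - 1`.
-/

theorem harm_succ (n : ℕ) : harm (n + 1) = harm n + 1 / (n + 1) := by
  rw [harm, Finset.sum_Icc_succ_top (by omega), ← harm]
  push_cast
  rfl

theorem one_le_harm {n : ℕ} (hn : 1 ≤ n) : 1 ≤ harm n := by
  have h := Finset.single_le_sum (f := fun j : ℕ => (1 : ℝ) / j) (fun _ _ => by positivity)
    (Finset.left_mem_Icc.mpr hn)
  simpa [harm] using h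

theorem mul_div_le_mul_one_add_inv {x y : ℝ} (hx : 1 < x) (hy : y ≤ x - 1) :
    (x - y) * (x ^ 2 - x + y) / (x * (x - 1)) ≤ (x - y) * (1 + 1 / x) := by
  have hx0 : 0 < x := by linarith
  rw [div_le_iff₀ (by nlinarith), one_add_div hx0.ne', mul_assoc (x - y), div_mul_eq_mul_div,
    mul_div_assoc, mul_div_cancel_left₀ _ hx0.ne']
  gcongr
  · linarith
  · nlinarith

theorem sub_mul_one_add_inv_mul_harm_succ_sub_one {n : ℕ} (hn : n ≠ 0) (k : ℝ) :
    ((n : ℝ) - k) * (1 + 1 / (n : ℝ)) * (harm (n + 1) - 1)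
      = (1 - k / n) + ((n : ℝ) - k) * (1 + 1 / (n : ℝ)) * (harm n - 1) := by
  rw [harm_succ]
  field_simp
  ring

theorem stmt_4 (n k : ℕ) (hn : 2 ≤ n) (hk : k ≤ n - 1) :
    (1 - (k : ℝ) / n) +
      (((n : ℝ) - k) * ((n : ℝ) ^ 2 - n + k) / ((n : ℝ) * ((n : ℝ) - 1))) *
        (harm n - 1)
      ≤ ((n : ℝ) - k) * (1 + 1 / (n : ℝ)) * (harm (n + 1) - 1) := by
  have hn' : (1 : ℝ) < n := by exact_mod_cast hn
  have hk' : (k : ℝ) ≤ n - 1 := by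
    rw [le_sub_iff_add_le]
    exact_mod_cast Nat.add_le_of_le_sub (by omega) hk
  have hH : 0 ≤ harm n - 1 := sub_nonneg.mpr (one_le_harm (by omega))
  rw [sub_mul_one_add_inv_mul_harm_succ_sub_one (by omega)]
  gcongr
  exact mul_div_le_mul_one_add_inv hn' hk'
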